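/- Let d > 1, β > β(d), and let h⁺ be the positive fixed point of x ↦ d·φ(x). Suppose 0 < h^t ≤ h⁺. Define sequences by a₀ ≥ h⁺, b₀ ≤ 0, and for even-to-even double steps a_{j+2} = h^t + d·φ(−h^t + d·φ(a_j)), b_{j+2} = h^t + d·φ(−h^t + d·φ(b_j)). Then a_j ≥ h⁺ and b_j ≤ 0 for all even j. -/

import Mathlib

/-- The inverse hyperbolic tangent, arctanh x = (1/2)·log((1+x)/(1-x)). -/
noncomputable def artanh (x : ℝ) : ℝ := (1 / 2) * Real.log ((1 + x) / (1 - x))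

/-- The one-step Ising tree recursion function φ(x) = arctanh(tanh β · tanh x). -/
noncomputable def phi (β x : ℝ) : ℝ := artanh (Real.tanh β * Real.tanh x)

/-!
The map ψ = d·φ is odd, increasing, and concave on [0, ∞) with ψ(0) = 0 and ψ(h⁺) = h⁺, so
ψ(x) ≥ x on [0, h⁺]. A double step x ↦ h^t + ψ(−h^t + ψ x) therefore maps [h⁺, ∞) into itself:
for x ≥ h⁺, ψ x ≥ h⁺ puts −h^t + ψ x above h⁺ − h^t ∈ [0, h⁺], where ψ gains at least h^t back.
It also maps (−∞, 0] into itself: ψ x ≤ 0 gives ψ(−h^t + ψ x) ≤ ψ(−h^t) = −ψ(h^t) ≤ −h^t.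
-/

open Set

namespace Real

theorem tanh_strictMono : StrictMono tanh := fun x y hxy => by
  by_contra! h
  have := artanh_le_artanh (neg_one_lt_tanh y) (tanh_lt_one x) h
  rw [artanh_tanh, artanh_tanh] at this
  exact this.not_gt hxy

theorem hasDerivAt_tanh (x : ℝ) : HasDerivAt tanh (1 - tanh x ^ 2) x := by
  have hcosh := (cosh_pos x).ne'
  have h := (hasDerivAt_sinh x).div (hasDerivAt_cosh x) hcosh
  rw [show sinh / cosh = tanh from funext fun y => (tanh_eq_sinh_div_cosh y).symm] at h
  refine h.congr_deriv ?_
  rw [tanh_eq_sinh_div_cosh]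
  field_simp

end Real

theorem artanh_eq_real_artanh {u : ℝ} (hu : u ∈ Icc (-1) 1) : artanh u = Real.artanh u :=
  (Real.artanh_eq_half_log hu).symm

theorem artanh_neg (u : ℝ) : artanh (-u) = -artanh u := by
  rw [artanh, artanh, show (1 + -u) / (1 - -u) = ((1 + u) / (1 - u))⁻¹ by rw [inv_div]; ring,
    Real.log_inv]
  ring

theorem hasDerivAt_artanh {u : ℝ} (hu : u ∈ Ioo (-1) 1) :
    HasDerivAt artanh (1 / (1 - u ^ 2)) u := by
  obtain ⟨hu₁, hu₂⟩ := hu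
  have hplus : (1 + u) ≠ 0 := by linarith
  have hminus : (1 - u) ≠ 0 := by linarith
  have hquot : HasDerivAt (fun u => (1 + u) / (1 - u)) (2 / (1 - u) ^ 2) u := by
    refine (((hasDerivAt_id' u).const_add 1).div ((hasDerivAt_id' u).const_sub 1)
      hminus).congr_deriv ?_
    field_simp
    ring
  have hsq : 1 - u ^ 2 ≠ 0 := by
    rw [show 1 - u ^ 2 = (1 - u) * (1 + u) by ring]
    exact mul_ne_zero hminus hplus
  refine ((hquot.log (div_ne_zero hplus hminus)).const_mul (1 / 2)).congr_deriv ?_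
  field_simp
  ring

theorem mul_tanh_mem_Ioo (β x : ℝ) : Real.tanh β * Real.tanh x ∈ Ioo (-1) 1 := by
  rw [mem_Ioo, ← abs_lt, abs_mul]
  exact mul_lt_one_of_nonneg_of_lt_one_left (abs_nonneg _) (Real.abs_tanh_lt_one β)
    (Real.abs_tanh_lt_one x).le

theorem phi_eq_real_artanh (β x : ℝ) : phi β x = Real.artanh (Real.tanh β * Real.tanh x) :=
  artanh_eq_real_artanh (Ioo_subset_Icc_self (mul_tanh_mem_Ioo β x))

theorem phi_zero (β : ℝ) : phi β 0 = 0 := by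
  simp [phi_eq_real_artanh]

theorem phi_neg (β x : ℝ) : phi β (-x) = -phi β x := by
  rw [phi, phi, Real.tanh_neg, mul_neg, artanh_neg]

theorem phi_monotone {β : ℝ} (hβ : 0 ≤ β) : Monotone (phi β) := fun x y hxy => by
  rw [phi_eq_real_artanh, phi_eq_real_artanh]
  exact Real.artanh_le_artanh (mul_tanh_mem_Ioo β x).1 (mul_tanh_mem_Ioo β y).2
    (mul_le_mul_of_nonneg_left (Real.tanh_strictMono.monotone hxy)
      (by simpa using Real.tanh_strictMono.monotone hβ))

theorem hasDerivAt_phi (β x : ℝ) :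
    HasDerivAt (phi β)
      (Real.tanh β * (1 - Real.tanh x ^ 2) / (1 - (Real.tanh β * Real.tanh x) ^ 2)) x := by
  refine ((hasDerivAt_artanh (mul_tanh_mem_Ioo β x)).comp x
    ((Real.hasDerivAt_tanh x).const_mul (Real.tanh β))).congr_deriv ?_
  ring

/-- `t (1 - p²) / (1 - (t p)²)` is `φ'` at a point where `tanh β = t` and `tanh x = p`. -/
theorem mul_one_sub_sq_div_le_of_le {t p q : ℝ} (ht₀ : 0 ≤ t) (ht₁ : t < 1) (hp : 0 ≤ p)
    (hpq : p ≤ q) (hq : q < 1) :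
    t * (1 - q ^ 2) / (1 - (t * q) ^ 2) ≤ t * (1 - p ^ 2) / (1 - (t * p) ^ 2) := by
  have hsq_lt_one {r : ℝ} (hr₀ : 0 ≤ r) (hr₁ : r < 1) : 0 < 1 - (t * r) ^ 2 := by
    have : t * r < 1 := by nlinarith
    nlinarith [mul_nonneg ht₀ hr₀]
  have htq := hsq_lt_one (hp.trans hpq) hq
  have htp := hsq_lt_one hp (hpq.trans_lt hq)
  rw [div_le_div_iff₀ htq htp]
  have : 0 ≤ t * ((q ^ 2 - p ^ 2) * (1 - t ^ 2)) :=
    mul_nonneg ht₀ (mul_nonneg (by nlinarith) (by nlinarith))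
  nlinarith

theorem concaveOn_phi {β : ℝ} (hβ : 0 ≤ β) : ConcaveOn ℝ (Ici 0) (phi β) := by
  have hdiff : Differentiable ℝ (phi β) := fun x => (hasDerivAt_phi β x).differentiableAt
  refine AntitoneOn.concaveOn_of_deriv (convex_Ici 0) hdiff.continuous.continuousOn
    hdiff.differentiableOn ?_
  rw [interior_Ici]
  intro x hx y _ hxy
  rw [(hasDerivAt_phi β x).deriv, (hasDerivAt_phi β y).deriv]
  exact mul_one_sub_sq_div_le_of_le (by simpa using Real.tanh_strictMono.monotone hβ)
    (Real.tanh_lt_one β) (by simpa using Real.tanh_strictMono.monotone (le_of_lt hx))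
    (Real.tanh_strictMono.monotone hxy) (Real.tanh_lt_one y)

theorem ConcaveOn.self_le_map_of_mem_Icc {f : ℝ → ℝ} (hf : ConcaveOn ℝ (Ici 0) f)
    (hf₀ : f 0 = 0) {p : ℝ} (hfp : f p = p) {x : ℝ} (hx : x ∈ Icc 0 p) : x ≤ f x := by
  rcases hx.1.eq_or_lt with rfl | hx₀
  · exact hf₀.ge
  have hp₀ : 0 < p := hx₀.trans_le hx.2
  have hslope := hf.slope_anti self_mem_Ici ⟨hx.1, hx₀.ne'⟩ ⟨hp₀.le, hp₀.ne'⟩ hx.2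
  rwa [slope_def_field, slope_def_field, hf₀, hfp, sub_zero, sub_zero, sub_zero,
    div_self hp₀.ne', le_div_iff₀ hx₀, one_mul] at hslope

section DoubleStep

variable {ψ : ℝ → ℝ} {p t : ℝ}

theorem le_add_map_neg_add_map (hψ : Monotone ψ) (hfix : ψ p = p)
    (hψ_ge : ∀ x ∈ Icc 0 p, x ≤ ψ x) (ht₀ : 0 ≤ t) (htp : t ≤ p) {x : ℝ} (hx : p ≤ x) :
    p ≤ t + ψ (-t + ψ x) := by
  have hpx : p ≤ ψ x := hfix ▸ hψ hx
  have := hψ_ge (p - t) ⟨by linarith, by linarith⟩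
  have := hψ (show p - t ≤ -t + ψ x by linarith)
  linarith

theorem add_map_neg_add_map_nonpos (hψ : Monotone ψ) (hodd : ∀ x, ψ (-x) = -ψ x)
    (ht : t ≤ ψ t) {x : ℝ} (hx : x ≤ 0) : t + ψ (-t + ψ x) ≤ 0 := by
  have hψ₀ : ψ 0 = 0 := by linarith [neg_zero (G := ℝ) ▸ hodd 0]
  have : ψ x ≤ 0 := hψ₀ ▸ hψ hx
  have := hodd t ▸ hψ (show -t + ψ x ≤ -t by linarith)
  linarith

end DoubleStep

theorem stmt_12_general (β d ht : ℝ) (hd : 1 < d) (hw : 1 < d * Real.tanh β)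
    (hp : ℝ) (hp_fix : d * phi β hp = hp)
    (hht : 0 < ht) (hth : ht ≤ hp)
    (a b : ℕ → ℝ) (ha0 : hp ≤ a 0) (hb0 : b 0 ≤ 0)
    (ha : ∀ j, a (j + 2) = ht + d * phi β (-ht + d * phi β (a j)))
    (hb : ∀ j, b (j + 2) = ht + d * phi β (-ht + d * phi β (b j))) :
    ∀ j, Even j → hp ≤ a j ∧ b j ≤ 0 := by
  have hd₀ : 0 ≤ d := by linarith
  have hβ : 0 ≤ β := by
    by_contra! hβ
    have := Real.tanh_strictMono hβ
    rw [Real.tanh_zero] at this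
    nlinarith
  have hψ : Monotone fun x => d * phi β x := (phi_monotone hβ).const_mul hd₀
  have hψ_ge : ∀ x ∈ Icc 0 hp, x ≤ d * phi β x := fun x hx =>
    ((concaveOn_phi hβ).smul hd₀).self_le_map_of_mem_Icc (by simp [phi_zero]) hp_fix hx
  rintro j ⟨k, rfl⟩
  induction k with
  | zero => exact ⟨ha0, hb0⟩
  | succ k ih =>
    rw [show k + 1 + (k + 1) = k + k + 2 by omega, ha, hb]
    exact ⟨le_add_map_neg_add_map hψ hp_fix hψ_ge hht.le hth ih.1,
      add_map_neg_add_map_nonpos hψ (fun x => by simp [phi_neg]) (hψ_ge ht ⟨hht.le, hth⟩) ih.2⟩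

theorem stmt_12 (β d ht : ℝ) (hd : 1 < d) (hw : 1 < d * Real.tanh β)
    (hp : ℝ) (hp_pos : 0 < hp) (hp_fix : d * phi β hp = hp)
    (hht : 0 < ht) (hth : ht ≤ hp)
    (a b : ℕ → ℝ) (ha0 : hp ≤ a 0) (hb0 : b 0 ≤ 0)
    (ha : ∀ j, a (j + 2) = ht + d * phi β (-ht + d * phi β (a j)))
    (hb : ∀ j, b (j + 2) = ht + d * phi β (-ht + d * phi β (b j))) :
    ∀ j, Even j → hp ≤ a j ∧ b j ≤ 0 :=
  stmt_12_general β d ht hd hw hp hp_fix hht hth a b ha0 hb0 ha hb
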